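/- Let D be a discriminant and f an odd prime. The map sending the class of a primitive form Q of discriminant Df² to the class of a primitive form q of discriminant D with q·R_f properly equivalent to Q is a well-defined surjection π from proper equivalence classes of primitive forms of discriminant Df² onto proper equivalence classes of primitive forms of discriminant D. -/

import Mathlib

/-!
Lifting: move a primitive form `Q` of discriminant `D f²` within its class so that `f ∤ a`,
then translate `(x, y) ↦ (x + t y, y)` so that `f ∣ b`; since `f ∤ 4a`, the discriminant forces
`f² ∣ c`, i.e. `Q = q · R_f` with `disc q = D`.

Well-definedness: if `(q · R_f) · U = q' · R_f` with `U ∈ SL₂(ℤ)` and `f ∤ q.a`, comparing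
`c`-coefficients gives `f ∣ U₀₁`, so `R_f U = V R_f` for some `V ∈ SL₂(ℤ)`, and cancelling
`R_f` gives `q · V = q'`. The same cancellation gives surjectivity: once `f ∤ q.a`, the
primitive form `q · R_f` is sent back to the class of `q`.
-/

structure BQF where
  a : ℤ
  b : ℤ
  c : ℤ

namespace BQF

def eval (q : BQF) (x y : ℤ) : ℤ := q.a * x ^ 2 + q.b * x * y + q.c * y ^ 2

def disc (q : BQF) : ℤ := q.b ^ 2 - 4 * q.a * q.c

def IsPrimitive (q : BQF) : Prop := Int.gcd (Int.gcd q.a q.b) q.c = 1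

/-- Right action: (q·M)(x,y) = q(px + ry, sx + ty) for M = [[p,r],[s,t]]. -/
def act (q : BQF) (M : Matrix (Fin 2) (Fin 2) ℤ) : BQF :=
  ⟨q.eval (M 0 0) (M 1 0),
   q.eval (M 0 0 + M 0 1) (M 1 0 + M 1 1) - q.eval (M 0 0) (M 1 0) - q.eval (M 0 1) (M 1 1),
   q.eval (M 0 1) (M 1 1)⟩

def ProperEquiv (q q' : BQF) : Prop :=
  ∃ U : Matrix.SpecialLinearGroup (Fin 2) ℤ, q.act U.1 = q'

end BQF

/-- R_g = [[f,g],[0,1]] for g < f, and R_f = [[1,0],[0,f]] when g = f. -/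
def Rmat (f g : ℤ) : Matrix (Fin 2) (Fin 2) ℤ :=
  if g = f then !![1, 0; 0, f] else !![f, g; 0, 1]

def IsDiscriminant (D : ℤ) : Prop := ¬ IsSquare D ∧ (D % 4 = 0 ∨ D % 4 = 1)

def IsFundamental (D : ℤ) : Prop :=
  (D % 4 = 1 ∧ Squarefree D) ∨
  (D % 4 = 0 ∧ Squarefree (D / 4) ∧ (D / 4 % 4 = 2 ∨ D / 4 % 4 = 3))

namespace BQF

@[ext]
lemma ext {q q' : BQF} (ha : q.a = q'.a) (hb : q.b = q'.b) (hc : q.c = q'.c) : q = q' := by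
  cases q; cases q'; simp_all

lemma act_mul (q : BQF) (M N : Matrix (Fin 2) (Fin 2) ℤ) :
    (q.act M).act N = q.act (M * N) := by
  ext <;> simp only [act, eval, Matrix.mul_apply, Fin.sum_univ_two] <;> ring

lemma act_one (q : BQF) : q.act 1 = q := by
  ext <;> simp [act, eval]
  ring

lemma disc_act (q : BQF) (M : Matrix (Fin 2) (Fin 2) ℤ) :
    (q.act M).disc = M.det ^ 2 * q.disc := by
  simp only [act, eval, disc, Matrix.det_fin_two]
  ring

lemma disc_act_SL (q : BQF) (U : Matrix.SpecialLinearGroup (Fin 2) ℤ) :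
    (q.act U).disc = q.disc := by
  rw [disc_act, U.2, one_pow, one_mul]

lemma act_translate (q : BQF) (t : ℤ) :
    q.act !![1, t; 0, 1] = ⟨q.a, q.b + 2 * q.a * t, q.a * t ^ 2 + q.b * t + q.c⟩ := by
  ext <;> simp [act, eval]
  ring

lemma Rmat_self (F : ℤ) : Rmat F F = !![1, 0; 0, F] := if_pos rfl

lemma act_Rmat_self (q : BQF) (F : ℤ) : q.act (Rmat F F) = ⟨q.a, q.b * F, q.c * F ^ 2⟩ := by
  ext <;> simp [Rmat_self, act, eval]
  ring

lemma disc_act_Rmat_self (q : BQF) (F : ℤ) : (q.act (Rmat F F)).disc = q.disc * F ^ 2 := by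
  rw [act_Rmat_self, disc, disc]
  ring

lemma act_Rmat_self_injective {F : ℤ} (hF : F ≠ 0) :
    Function.Injective fun q : BQF => q.act (Rmat F F) := by
  intro q q' h
  simp only [act_Rmat_self, mk.injEq] at h
  obtain ⟨ha, hb, hc⟩ := h
  exact ext ha (mul_right_cancel₀ hF hb) (mul_right_cancel₀ (pow_ne_zero 2 hF) hc)

namespace ProperEquiv

lemma symm {q q' : BQF} (h : ProperEquiv q q') : ProperEquiv q' q := by
  obtain ⟨U, rfl⟩ := h
  exact ⟨U⁻¹, by rw [act_mul, ← Matrix.SpecialLinearGroup.coe_mul, mul_inv_cancel,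
    Matrix.SpecialLinearGroup.coe_one, act_one]⟩

lemma trans {q q' q'' : BQF} (h : ProperEquiv q q') (h' : ProperEquiv q' q'') :
    ProperEquiv q q'' := by
  obtain ⟨U, rfl⟩ := h
  obtain ⟨V, rfl⟩ := h'
  exact ⟨U * V, by rw [Matrix.SpecialLinearGroup.coe_mul, act_mul]⟩

end ProperEquiv

lemma properEquiv_act (q : BQF) (U : Matrix.SpecialLinearGroup (Fin 2) ℤ) :
    ProperEquiv q (q.act U) :=
  ⟨U, rfl⟩

lemma isPrimitive_iff (q : BQF) :
    q.IsPrimitive ↔ ∀ d : ℤ, d ∣ q.a → d ∣ q.b → d ∣ q.c → IsUnit d := by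
  constructor
  · intro hq d ha hb hc
    have : d ∣ (Int.gcd (Int.gcd q.a q.b) q.c : ℤ) :=
      Int.dvd_coe_gcd (Int.dvd_coe_gcd ha hb) hc
    rw [hq, Nat.cast_one] at this
    exact isUnit_of_dvd_one this
  · intro h
    have hg := h _ ((Int.gcd_dvd_left _ _).trans (Int.gcd_dvd_left _ _))
      ((Int.gcd_dvd_left _ _).trans (Int.gcd_dvd_right _ _)) (Int.gcd_dvd_right _ _)
    rwa [Int.isUnit_iff_natAbs_eq, Int.natAbs_natCast] at hg

lemma IsPrimitive.of_act {q : BQF} {M : Matrix (Fin 2) (Fin 2) ℤ} (h : (q.act M).IsPrimitive) :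
    q.IsPrimitive := by
  rw [isPrimitive_iff] at h ⊢
  intro d ha hb hc
  have hval : ∀ x y, d ∣ q.eval x y := fun x y =>
    dvd_add (dvd_add (ha.mul_right _) ((hb.mul_right x).mul_right y)) (hc.mul_right _)
  exact h d (hval _ _) (dvd_sub (dvd_sub (hval _ _) (hval _ _)) (hval _ _)) (hval _ _)

lemma ProperEquiv.isPrimitive {q q' : BQF} (h : ProperEquiv q q') (hq : q.IsPrimitive) :
    q'.IsPrimitive := by
  obtain ⟨U, hU⟩ := h.symm
  exact IsPrimitive.of_act (M := U.1) (hU ▸ hq)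

lemma isCoprime_a_of_isPrimitive_act_Rmat_self {q : BQF} {F : ℤ}
    (h : (q.act (Rmat F F)).IsPrimitive) : IsCoprime F q.a := by
  rw [act_Rmat_self, isPrimitive_iff] at h
  rw [Int.isCoprime_iff_gcd_eq_one, ← Int.natAbs_natCast (F.gcd q.a), ← Int.isUnit_iff_natAbs_eq]
  exact h _ (Int.gcd_dvd_right _ _) ((Int.gcd_dvd_left _ _).mul_left _)
    (((Int.gcd_dvd_left _ _).pow two_ne_zero).mul_left _)

lemma IsPrimitive.act_Rmat_self {q : BQF} {F : ℤ} (hq : q.IsPrimitive) (ha : IsCoprime F q.a) :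
    (q.act (Rmat F F)).IsPrimitive := by
  rw [BQF.act_Rmat_self, isPrimitive_iff]
  rw [isPrimitive_iff] at hq
  intro d hda hdb hdc
  have hFd : IsCoprime F d := ha.of_isCoprime_of_dvd_right hda
  exact hq d hda (hFd.symm.dvd_of_dvd_mul_right hdb) (hFd.symm.pow_right.dvd_of_dvd_mul_right hdc)

lemma exists_not_dvd_act_a {p : ℤ} (hp : Prime p) {q : BQF} (hq : q.IsPrimitive) :
    ∃ U : Matrix.SpecialLinearGroup (Fin 2) ℤ, ¬ p ∣ (q.act U).a := by
  by_cases ha : p ∣ q.a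
  swap
  · exact ⟨1, by rwa [Matrix.SpecialLinearGroup.coe_one, act_one]⟩
  by_cases hc : p ∣ q.c
  swap
  · refine ⟨⟨!![0, -1; 1, 0], by simp [Matrix.det_fin_two_of]⟩, ?_⟩
    simpa [act, eval] using hc
  have hb : ¬ p ∣ q.b := fun hb => hp.not_isUnit ((isPrimitive_iff q).1 hq p ha hb hc)
  refine ⟨⟨!![1, -1; 1, 0], by simp [Matrix.det_fin_two_of]⟩, ?_⟩
  have hval : (q.act !![1, -1; 1, 0]).a = q.a + q.b + q.c := by simp [act, eval]
  rw [Matrix.SpecialLinearGroup.coe_mk, hval]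
  intro h
  rw [show q.b = q.a + q.b + q.c - q.a - q.c by ring] at hb
  exact hb (dvd_sub (dvd_sub h ha) hc)

/-- `R_F · U = V · R_F` once `F ∣ U₀₁`. -/
lemma Rmat_self_mul_eq (F p r s t : ℤ) :
    !![1, 0; 0, F] * !![p, F * r; s, t] = !![p, r; F * s, t] * !![1, 0; 0, F] := by
  ext i j
  fin_cases i <;> fin_cases j <;> simp [Matrix.mul_apply, Fin.sum_univ_two] <;> ring

lemma ProperEquiv.of_act_Rmat_self {F : ℤ} (hF : Prime F) {q q' : BQF} (ha : IsCoprime F q.a)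
    (h : ProperEquiv (q.act (Rmat F F)) (q'.act (Rmat F F))) : ProperEquiv q q' := by
  obtain ⟨U, hU⟩ := h
  have hc : q.a * U.1 0 1 ^ 2 + q.b * F * U.1 0 1 * U.1 1 1 + q.c * F ^ 2 * U.1 1 1 ^ 2
      = q'.c * F ^ 2 := by
    have := congrArg BQF.c hU
    rw [act_Rmat_self, act_Rmat_self] at this
    simp only [act, eval] at this
    linear_combination this
  obtain ⟨r, hr⟩ : F ∣ U.1 0 1 := hF.dvd_of_dvd_pow (n := 2) <| ha.dvd_of_dvd_mul_left
    ⟨q'.c * F - q.b * U.1 0 1 * U.1 1 1 - q.c * F * U.1 1 1 ^ 2, by linear_combination hc⟩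
  have hU' : U.1 = !![U.1 0 0, F * r; U.1 1 0, U.1 1 1] := by
    rw [← hr]; exact Matrix.eta_fin_two U.1
  have hdet : (!![U.1 0 0, r; F * U.1 1 0, U.1 1 1]).det = 1 := by
    have := U.2
    rw [hU', Matrix.det_fin_two_of] at this
    rw [Matrix.det_fin_two_of]; linear_combination this
  refine ⟨⟨_, hdet⟩, act_Rmat_self_injective hF.ne_zero ?_⟩
  simp only [act_mul, Rmat_self] at hU ⊢
  rw [← Rmat_self_mul_eq, ← hU', hU]

lemma exists_act_Rmat_self_eq {F D : ℤ} {Q : BQF} (hF : IsCoprime F (2 * Q.a)) (hFb : F ∣ Q.b)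
    (hd : Q.disc = D * F ^ 2) : ∃ q : BQF, q.disc = D ∧ q.act (Rmat F F) = Q := by
  have hF0 : F ≠ 0 := by
    rintro rfl
    have := isUnit_of_mul_isUnit_left (isCoprime_zero_left.1 hF)
    norm_num [Int.isUnit_iff] at this
  obtain ⟨b, hb⟩ := hFb
  -- `F² ∣ 4 a c` because the discriminant is `≡ b² ≡ 0 (mod F²)`
  obtain ⟨c, hc⟩ : F ^ 2 ∣ Q.c := by
    have h4a : IsCoprime (F ^ 2) (2 * (2 * Q.a)) :=
      (hF.of_mul_right_left.mul_right hF).pow_left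
    refine h4a.dvd_of_dvd_mul_left ⟨b ^ 2 - D, ?_⟩
    rw [disc, hb] at hd
    linear_combination -hd
  have hQ : BQF.act ⟨Q.a, b, c⟩ (Rmat F F) = Q := by
    ext <;> simp [act_Rmat_self, hb, hc] <;> ring
  refine ⟨_, mul_right_cancel₀ (pow_ne_zero 2 hF0) ?_, hQ⟩
  rw [← disc_act_Rmat_self, hQ, hd]

lemma exists_act_Rmat_self_properEquiv {F D : ℤ} {Q : BQF} (hF : IsCoprime F (2 * Q.a))
    (hd : Q.disc = D * F ^ 2) : ∃ q : BQF, q.disc = D ∧ ProperEquiv (q.act (Rmat F F)) Q := by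
  obtain ⟨u, v, huv⟩ := hF.symm
  set T : Matrix.SpecialLinearGroup (Fin 2) ℤ := ⟨!![1, -Q.b * u; 0, 1], by simp⟩
  -- `b + 2a(-bu) = b (1 - 2au) = b v F`
  have hFb : F ∣ (Q.act T).b := ⟨Q.b * v, by
    simp only [T, act_translate]
    linear_combination -Q.b * huv⟩
  have hFa : IsCoprime F (2 * (Q.act T).a) := by
    simpa [T, act_translate] using hF
  obtain ⟨q, hq, hqQ⟩ := exists_act_Rmat_self_eq hFa hFb (by rw [disc_act_SL, hd])
  exact ⟨q, hq, hqQ ▸ (properEquiv_act Q T).symm⟩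

lemma exists_isPrimitive_act_Rmat_self_properEquiv {F D : ℤ} (hF : Prime F) (hF2 : ¬ F ∣ 2)
    {Q : BQF} (hQ : Q.IsPrimitive) (hd : Q.disc = D * F ^ 2) :
    ∃ q : BQF, q.IsPrimitive ∧ q.disc = D ∧ ProperEquiv (q.act (Rmat F F)) Q := by
  obtain ⟨U, hU⟩ := exists_not_dvd_act_a hF hQ
  have hFa : IsCoprime F (2 * (Q.act U).a) :=
    (hF.coprime_iff_not_dvd).2 fun h => (hF.dvd_or_dvd h).elim hF2 hU
  obtain ⟨q, hq, hqQ⟩ := exists_act_Rmat_self_properEquiv hFa (by rw [disc_act_SL, hd])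
  have hqQ' : ProperEquiv (q.act (Rmat F F)) Q := hqQ.trans (properEquiv_act Q U).symm
  exact ⟨q, (hqQ'.symm.isPrimitive hQ).of_act, hq, hqQ'⟩

end BQF

open BQF in
theorem stmt16_general (D : ℤ) (f : ℕ)
    (hf : f.Prime) (hodd : Odd f) :
    ∃ pr : {Q : BQF // Q.IsPrimitive ∧ Q.disc = D * f ^ 2} →
          {q : BQF // q.IsPrimitive ∧ q.disc = D},
      (∀ Q, BQF.ProperEquiv ((pr Q).1.act (Rmat f f)) Q.1) ∧
      (∀ Q₁ Q₂, BQF.ProperEquiv Q₁.1 Q₂.1 → BQF.ProperEquiv (pr Q₁).1 (pr Q₂).1) ∧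
      (∀ q : {q : BQF // q.IsPrimitive ∧ q.disc = D}, ∃ Q, BQF.ProperEquiv (pr Q).1 q.1) := by
  have hp : Prime (f : ℤ) := Nat.prime_iff_prime_int.mp hf
  have hp2 : ¬ (f : ℤ) ∣ 2 := by
    rw [Int.natCast_dvd_ofNat, Nat.prime_dvd_prime_iff_eq hf Nat.prime_two]
    rintro rfl
    exact absurd hodd (by decide)
  have lift : ∀ Q : {Q : BQF // Q.IsPrimitive ∧ Q.disc = D * f ^ 2},
      ∃ q : {q : BQF // q.IsPrimitive ∧ q.disc = D}, ProperEquiv (q.1.act (Rmat f f)) Q.1 :=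
    fun Q =>
      let ⟨q, hq, hd, he⟩ := exists_isPrimitive_act_Rmat_self_properEquiv hp hp2 Q.2.1 Q.2.2
      ⟨⟨q, hq, hd⟩, he⟩
  choose pr hpr using lift
  refine ⟨pr, hpr, fun Q₁ Q₂ h => ?_, fun q => ?_⟩
  · exact ProperEquiv.of_act_Rmat_self hp
      (isCoprime_a_of_isPrimitive_act_Rmat_self ((hpr Q₁).symm.isPrimitive Q₁.2.1))
      ((hpr Q₁).trans (h.trans (hpr Q₂).symm))
  · obtain ⟨U, hU⟩ := exists_not_dvd_act_a hp q.2.1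
    have hUa := hp.coprime_iff_not_dvd.2 hU
    let Q : {Q : BQF // Q.IsPrimitive ∧ Q.disc = D * f ^ 2} :=
      ⟨(q.1.act U).act (Rmat f f), ((properEquiv_act q.1 U).isPrimitive q.2.1).act_Rmat_self hUa,
        by rw [disc_act_Rmat_self, disc_act_SL, q.2.2]⟩
    exact ⟨Q, (ProperEquiv.of_act_Rmat_self hp hUa (hpr Q).symm).symm.trans
      (properEquiv_act q.1 U).symm⟩

theorem stmt16 (D : ℤ) (hD : IsDiscriminant D) (f : ℕ)
    (hf : f.Prime) (hodd : Odd f) :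
    ∃ pr : {Q : BQF // Q.IsPrimitive ∧ Q.disc = D * f ^ 2} →
          {q : BQF // q.IsPrimitive ∧ q.disc = D},
      (∀ Q, BQF.ProperEquiv ((pr Q).1.act (Rmat f f)) Q.1) ∧
      (∀ Q₁ Q₂, BQF.ProperEquiv Q₁.1 Q₂.1 → BQF.ProperEquiv (pr Q₁).1 (pr Q₂).1) ∧
      (∀ q : {q : BQF // q.IsPrimitive ∧ q.disc = D}, ∃ Q, BQF.ProperEquiv (pr Q).1 q.1) :=
  stmt16_general D f hf hodd
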